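/- arXiv:2504.18192 — 2 statements merged into one kernel-verified Lean document; each statement's English description precedes it below -/
import Mathlib

section
/- (Ergodic theorem for martingale differences, shifted version) Let (X, ℬ, μ) be a probability space, ℬ_1 ⊆ ℬ_2 ⊆ ... ⊆ ℬ an increasing sequence of σ-algebras, k ∈ ℕ fixed, and (f_n) a uniformly bounded sequence with f_n measurable with respect to ℬ_{n+k}. Then almost surely (1/N)∑_{n=1}^N (f_n − E(f_n | ℬ_n)) → 0 as N → ∞. -/
open MeasureTheory Filter

/-- Ergodic theorem for martingale differences (shifted version): if `(ℬ_n)` is an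
increasing sequence of sub-σ-algebras, `k` is fixed, and `(f_n)` is a uniformly bounded
sequence with `f_n` measurable with respect to `ℬ_{n+k}`, then almost surely
`(1/N) ∑_{n<N} (f_n − E(f_n | ℬ_n)) → 0`. -/
theorem stmt6 {X : Type*} [m : MeasurableSpace X] (μ : Measure X) [IsProbabilityMeasure μ]
    (ℬ : ℕ → MeasurableSpace X) (hmono : Monotone ℬ) (hle : ∀ n, ℬ n ≤ m)
    (k : ℕ) (f : ℕ → X → ℝ) (M : ℝ)
    (hmeas : ∀ n, StronglyMeasurable[ℬ (n + k)] (f n))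
    (hbdd : ∀ n, ∀ᵐ x ∂μ, |f n x| ≤ M) :
    ∀ᵐ x ∂μ, Tendsto
      (fun N : ℕ => (N : ℝ)⁻¹ * ∑ n ∈ Finset.range N, (f n x - (μ[f n | ℬ n]) x))
      atTop (nhds 0) := by
  -- M is nonnegative
  have hM0 : 0 ≤ M := by
    obtain ⟨x, hx⟩ := (hbdd 0).exists
    exact le_trans (abs_nonneg _) hx
  set d : ℕ → X → ℝ := fun n x => f n x - (μ[f n | ℬ n]) x with hd_def
  -- basic properties
  have hfm : ∀ n, StronglyMeasurable[m] (f n) := fun n => (hmeas n).mono (hle (n + k))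
  have hfint : ∀ n, Integrable (f n) μ := fun n =>
    ⟨(hfm n).aestronglyMeasurable,
      HasFiniteIntegral.of_bounded ((hbdd n).mono fun x hx => by rwa [Real.norm_eq_abs])⟩
  have hdm : ∀ n, StronglyMeasurable[m] (d n) := fun n =>
    (hfm n).sub (stronglyMeasurable_condExp.mono (hle n))
  have hdbdd : ∀ n, ∀ᵐ x ∂μ, |d n x| ≤ 2 * M := by
    intro n
    have hbdd' : ∀ᵐ x ∂μ, |f n x| ≤ (M.toNNReal : ℝ) := by
      simpa [Real.coe_toNNReal M hM0] using hbdd n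
    have hce := ae_bdd_condExp_of_ae_bdd (m := ℬ n) (μ := μ) hbdd'
    filter_upwards [hbdd n, hce] with x h1 h2
    have : |d n x| ≤ |f n x| + |(μ[f n | ℬ n]) x| := abs_sub _ _
    have h2' : |(μ[f n | ℬ n]) x| ≤ M := by rwa [Real.coe_toNNReal M hM0] at h2
    linarith
  have hdint : ∀ n, Integrable (d n) μ := fun n => (hfint n).sub integrable_condExp
  have hprod_int : ∀ n n', Integrable (fun x => d n x * d n' x) μ := by
    intro n n'
    refine ⟨((hdm n).mul (hdm n')).aestronglyMeasurable, HasFiniteIntegral.of_bounded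
      (C := (2 * M) * (2 * M)) ?_⟩
    filter_upwards [hdbdd n, hdbdd n'] with x h1 h2
    rw [Real.norm_eq_abs, abs_mul]
    exact mul_le_mul h1 h2 (abs_nonneg _) (by linarith)
  have hd_condexp : ∀ n, μ[d n | ℬ n] =ᵐ[μ] 0 := by
    intro n
    have h1 : μ[d n | ℬ n] =ᵐ[μ] μ[f n | ℬ n] - μ[μ[f n | ℬ n] | ℬ n] :=
      condExp_sub (hfint n) integrable_condExp (ℬ n)
    have h2 : μ[μ[f n | ℬ n] | ℬ n] = μ[f n | ℬ n] :=
      condExp_of_stronglyMeasurable (hle n) stronglyMeasurable_condExp integrable_condExp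
    filter_upwards [h1] with x hx
    simp [hx, h2]
  -- orthogonality
  have horth : ∀ n n', n + k ≤ n' → ∫ x, d n x * d n' x ∂μ = 0 := by
    intro n n' hnn'
    have hB1 : ℬ (n + k) ≤ ℬ n' := hmono hnn'
    have hB2 : ℬ n ≤ ℬ n' := hmono (le_trans (Nat.le_add_right n k) hnn')
    have hdm' : StronglyMeasurable[ℬ n'] (d n) :=
      ((hmeas n).mono hB1).sub (stronglyMeasurable_condExp.mono hB2)
    have h1 : μ[(fun x => d n x * d n' x) | ℬ n'] =ᵐ[μ] fun x => d n x * (μ[d n' | ℬ n']) x :=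
      condExp_mul_of_stronglyMeasurable_left hdm' (hprod_int n n') (hdint n')
    have h2 : (fun x => d n x * (μ[d n' | ℬ n']) x) =ᵐ[μ] fun _ => (0 : ℝ) := by
      filter_upwards [hd_condexp n'] with x hx
      simp [hx]
    rw [← integral_condExp (hle n') (f := fun x => d n x * d n' x)]
    rw [integral_congr_ae (h1.trans h2)]
    simp
  -- second moment bound
  set S : ℕ → X → ℝ := fun N x => ∑ n ∈ Finset.range N, d n x with hS_def
  set C : ℝ := 2 * k * ((2 * M) * (2 * M)) with hC_def
  have hC0 : 0 ≤ C := by positivity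
  have hterm_bdd : ∀ n n', ∫ x, d n x * d n' x ∂μ ≤ (2 * M) * (2 * M) := by
    intro n n'
    have : ∫ x, d n x * d n' x ∂μ ≤ ∫ _, (2 * M) * (2 * M) ∂μ := by
      refine integral_mono_ae (hprod_int n n') (integrable_const _) ?_
      filter_upwards [hdbdd n, hdbdd n'] with x h1 h2
      calc d n x * d n' x ≤ |d n x * d n' x| := le_abs_self _
        _ = |d n x| * |d n' x| := abs_mul _ _
        _ ≤ (2 * M) * (2 * M) := mul_le_mul h1 h2 (abs_nonneg _) (by linarith)
    simpa using this
  have hS2 : ∀ N : ℕ, ∫ x, (S N x) ^ 2 ∂μ ≤ N * C := by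
    intro N
    have hsq : ∀ x, (S N x) ^ 2 = ∑ n ∈ Finset.range N, ∑ n' ∈ Finset.range N,
        d n x * d n' x := by
      intro x
      rw [sq, hS_def]
      exact Finset.sum_mul_sum _ _ _ _
    calc ∫ x, (S N x) ^ 2 ∂μ
        = ∫ x, ∑ n ∈ Finset.range N, ∑ n' ∈ Finset.range N, d n x * d n' x ∂μ := by
          exact integral_congr_ae (Filter.Eventually.of_forall hsq)
      _ = ∑ n ∈ Finset.range N, ∑ n' ∈ Finset.range N, ∫ x, d n x * d n' x ∂μ := by
          rw [integral_finset_sum _ (fun n _ => integrable_finset_sum _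
            (fun n' _ => hprod_int n n'))]
          exact Finset.sum_congr rfl fun n _ =>
            integral_finset_sum _ fun n' _ => hprod_int n n'
      _ ≤ ∑ n ∈ Finset.range N, C := by
          refine Finset.sum_le_sum fun n _ => ?_
          calc ∑ n' ∈ Finset.range N, ∫ x, d n x * d n' x ∂μ
              ≤ ∑ n' ∈ Finset.range N,
                  (if n' ∈ Finset.Ico (n + 1 - k) (n + k) then (2 * M) * (2 * M) else 0) := by
                refine Finset.sum_le_sum fun n' _ => ?_
                by_cases hmem : n' ∈ Finset.Ico (n + 1 - k) (n + k)
                · rw [if_pos hmem]; exact hterm_bdd n n'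
                · rw [if_neg hmem]
                  rw [Finset.mem_Ico, not_and_or, not_le, not_lt] at hmem
                  rcases hmem with h | h
                  · have h' : n' + k ≤ n := by omega
                    have := horth n' n h'
                    rw [← this]
                    apply le_of_eq
                    exact integral_congr_ae (Filter.Eventually.of_forall fun x => mul_comm _ _)
                  · exact le_of_eq (horth n n' h)
            _ = ∑ n' ∈ Finset.range N ∩ Finset.Ico (n + 1 - k) (n + k),
                  ((2 * M) * (2 * M)) := Finset.sum_ite_mem _ _ _
            _ ≤ C := by
                rw [Finset.sum_const, nsmul_eq_mul, hC_def]
                have hcard : (Finset.range N ∩ Finset.Ico (n + 1 - k) (n + k)).card ≤ 2 * k := by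
                  calc (Finset.range N ∩ Finset.Ico (n + 1 - k) (n + k)).card
                      ≤ (Finset.Ico (n + 1 - k) (n + k)).card :=
                        Finset.card_le_card (Finset.inter_subset_right)
                    _ = (n + k) - (n + 1 - k) := Nat.card_Ico _ _
                    _ ≤ 2 * k := by omega
                have : ((Finset.range N ∩ Finset.Ico (n + 1 - k) (n + k)).card : ℝ) ≤ 2 * (k : ℝ) := by
                  exact_mod_cast hcard
                nlinarith [mul_nonneg (mul_nonneg (by norm_num : (0:ℝ) ≤ 2) hM0)
                  (mul_nonneg (by norm_num : (0:ℝ) ≤ 2) hM0)]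
      _ = N * C := by rw [Finset.sum_const, Finset.card_range, nsmul_eq_mul]
  -- averages
  set A : ℕ → X → ℝ := fun N x => (N : ℝ)⁻¹ * S N x with hA_def
  have hAm : ∀ N, StronglyMeasurable[m] (A N) := fun N =>
    (Finset.stronglyMeasurable_fun_sum _ fun n _ => hdm n).const_mul _
  have hdball : ∀ᵐ x ∂μ, ∀ n, |d n x| ≤ 2 * M := ae_all_iff.mpr hdbdd
  have hAbdd : ∀ N, ∀ᵐ x ∂μ, |A N x| ≤ 2 * M := by
    intro N
    filter_upwards [hdball] with x hx
    rcases Nat.eq_zero_or_pos N with h | h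
    · simp [hA_def, h]; positivity
    calc |A N x| = (N : ℝ)⁻¹ * |S N x| := by
          rw [hA_def, abs_mul, abs_inv, Nat.abs_cast]
      _ ≤ (N : ℝ)⁻¹ * (N * (2 * M)) := by
          refine mul_le_mul_of_nonneg_left ?_ (by positivity)
          calc |S N x| ≤ ∑ n ∈ Finset.range N, |d n x| := Finset.abs_sum_le_sum_abs _ _
            _ ≤ ∑ _n ∈ Finset.range N, (2 * M) := Finset.sum_le_sum fun n _ => hx n
            _ = N * (2 * M) := by rw [Finset.sum_const, Finset.card_range, nsmul_eq_mul]
      _ = 2 * M := by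
          field_simp
  have hAint2 : ∀ N, Integrable (fun x => (A N x) ^ 2) μ := by
    intro N
    refine ⟨((hAm N).measurable.pow_const 2).aestronglyMeasurable,
      HasFiniteIntegral.of_bounded (C := (2 * M) ^ 2) ?_⟩
    filter_upwards [hAbdd N] with x hx
    rw [Real.norm_eq_abs, abs_pow]
    exact pow_le_pow_left₀ (abs_nonneg _) hx 2
  -- bound on the integral of A N ^ 2
  have hA2bound : ∀ N : ℕ, ∫ x, (A N x) ^ 2 ∂μ ≤ C * (N : ℝ)⁻¹ := by
    intro N
    rcases Nat.eq_zero_or_pos N with h | h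
    · subst h
      simp [hA_def, hS_def]
    have hNpos : (0 : ℝ) < N := by exact_mod_cast h
    have : ∫ x, (A N x) ^ 2 ∂μ = ((N : ℝ)⁻¹) ^ 2 * ∫ x, (S N x) ^ 2 ∂μ := by
      rw [← integral_const_mul]
      refine integral_congr_ae (Filter.Eventually.of_forall fun x => ?_)
      rw [hA_def]; ring
    rw [this]
    calc ((N : ℝ)⁻¹) ^ 2 * ∫ x, (S N x) ^ 2 ∂μ ≤ ((N : ℝ)⁻¹) ^ 2 * (N * C) := by
          exact mul_le_mul_of_nonneg_left (hS2 N) (by positivity)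
      _ = C * (N : ℝ)⁻¹ := by field_simp
  -- summability along squares
  have hsum : ∑' m : ℕ, ∫⁻ x, ENNReal.ofReal ((A (m ^ 2) x) ^ 2) ∂μ ≠ ⊤ := by
    have hEq : ∀ N : ℕ, ∫⁻ x, ENNReal.ofReal ((A N x) ^ 2) ∂μ
        = ENNReal.ofReal (∫ x, (A N x) ^ 2 ∂μ) :=
      fun N => (ofReal_integral_eq_lintegral_ofReal (hAint2 N)
        (Filter.Eventually.of_forall fun x => sq_nonneg _)).symm
    have hbound : ∀ m : ℕ, ∫⁻ x, ENNReal.ofReal ((A (m ^ 2) x) ^ 2) ∂μ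
        ≤ ENNReal.ofReal (C * (1 / (m : ℝ) ^ 2)) := by
      intro m
      rw [hEq]
      refine ENNReal.ofReal_le_ofReal ?_
      have := hA2bound (m ^ 2)
      rw [Nat.cast_pow] at this
      simpa [one_div] using this
    refine ne_top_of_le_ne_top ?_ (ENNReal.tsum_le_tsum hbound)
    have hsummable : Summable (fun m : ℕ => C * (1 / (m : ℝ) ^ 2)) :=
      (Real.summable_one_div_nat_pow.mpr one_lt_two).mul_left C
    rw [← ENNReal.ofReal_tsum_of_nonneg (fun m => by positivity) hsummable]
    exact ENNReal.ofReal_ne_top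
  -- a.e. convergence along squares
  have hmeasm : ∀ m : ℕ, Measurable fun x => ENNReal.ofReal ((A (m ^ 2) x) ^ 2) :=
    fun m => ((hAm (m ^ 2)).measurable.pow_const 2).ennreal_ofReal
  have htend1 : ∀ᵐ x ∂μ, Tendsto (fun m : ℕ => A (m ^ 2) x) atTop (nhds 0) := by
    have hfin : ∫⁻ x, ∑' m : ℕ, ENNReal.ofReal ((A (m ^ 2) x) ^ 2) ∂μ ≠ ⊤ :=
      ne_of_eq_of_ne
        (lintegral_tsum (f := fun (m : ℕ) x => ENNReal.ofReal ((A (m ^ 2) x) ^ 2))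
          (fun m => (hmeasm m).aemeasurable)) hsum
    filter_upwards [ae_lt_top (Measurable.ennreal_tsum hmeasm) hfin] with x hx
    have h1 : Tendsto (fun m : ℕ => ENNReal.ofReal ((A (m ^ 2) x) ^ 2)) atTop (nhds 0) :=
      ENNReal.tendsto_atTop_zero_of_tsum_ne_top hx.ne
    have h2 : Tendsto (fun m : ℕ => (A (m ^ 2) x) ^ 2) atTop (nhds 0) := by
      have := (ENNReal.tendsto_toReal (by simp : (0 : ENNReal) ≠ ⊤)).comp h1
      simp only [Function.comp_def, ENNReal.toReal_zero] at this
      exact this.congr fun m => ENNReal.toReal_ofReal (sq_nonneg _)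
    have h3 : Tendsto (fun m : ℕ => |A (m ^ 2) x|) atTop (nhds 0) := by
      have := (Real.continuous_sqrt.tendsto 0).comp h2
      simp only [Function.comp_def, Real.sqrt_zero] at this
      exact this.congr fun m => Real.sqrt_sq_eq_abs _
    exact squeeze_zero_norm' (Filter.Eventually.of_forall fun m =>
      le_of_eq (Real.norm_eq_abs _)) h3
  -- main argument: interpolation
  suffices main : ∀ᵐ x ∂μ, Tendsto (fun N : ℕ => A N x) atTop (nhds 0) by exact main
  clear_value A S d
  clear hsum hmeasm
  filter_upwards [htend1, hdball] with x hx1 hx2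
  have hsqrt_tendsto : Tendsto Nat.sqrt atTop atTop := by
    refine tendsto_atTop_atTop.mpr fun b => ⟨b * b, fun a ha => ?_⟩
    calc b = Nat.sqrt (b * b) := (Nat.sqrt_eq b).symm
      _ ≤ Nat.sqrt a := Nat.sqrt_le_sqrt ha
  refine squeeze_zero_norm' (f := fun N => A N x)
    (a := fun N => |A (Nat.sqrt N ^ 2) x| + 4 * M * ((Nat.sqrt N : ℝ))⁻¹) ?_ ?_
  · -- the bound, eventually
    filter_upwards [eventually_ge_atTop 1] with N hN
    set s := Nat.sqrt N with hs_def
    have hs1 : 1 ≤ s := by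
      rw [hs_def]; exact Nat.one_le_iff_ne_zero.mpr (by
        intro h; have := Nat.sqrt_eq_zero.mp h; omega)
    have hsle : s ^ 2 ≤ N := by rw [hs_def]; exact Nat.sqrt_le' N
    have hslt : N < (s + 1) ^ 2 := by
      rw [hs_def]; simpa [Nat.succ_eq_add_one] using Nat.lt_succ_sqrt' N
    have hNs : N - s ^ 2 ≤ 2 * s := by
      have hexp : (s + 1) ^ 2 = s ^ 2 + 2 * s + 1 := by ring
      omega
    have hspos : (0 : ℝ) < s := by exact_mod_cast hs1
    have hNpos : (0 : ℝ) < N := by exact_mod_cast hN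
    -- |S N x - S (s^2) x| ≤ (N - s^2) * 2M
    have hdiff : |S N x - S (s ^ 2) x| ≤ (N - s ^ 2 : ℕ) * (2 * M) := by
      rw [hS_def]
      rw [← Finset.sum_Ico_eq_sub _ hsle]
      calc |∑ n ∈ Finset.Ico (s ^ 2) N, d n x| ≤ ∑ n ∈ Finset.Ico (s ^ 2) N, |d n x| :=
            Finset.abs_sum_le_sum_abs _ _
        _ ≤ ∑ _n ∈ Finset.Ico (s ^ 2) N, (2 * M) := Finset.sum_le_sum fun n _ => hx2 n
        _ = (N - s ^ 2 : ℕ) * (2 * M) := by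
            rw [Finset.sum_const, Nat.card_Ico, nsmul_eq_mul]
    have hSs : |S (s ^ 2) x| = (s : ℝ) ^ 2 * |A (s ^ 2) x| := by
      rw [hA_def, abs_mul, abs_inv]
      push_cast
      rw [abs_of_nonneg (by positivity : (0:ℝ) ≤ (s:ℝ)^2)]
      field_simp
    have hcast1 : ((N - s ^ 2 : ℕ) : ℝ) ≤ 2 * s := by exact_mod_cast hNs
    have hs2leN : ((s : ℝ)) ^ 2 ≤ (N : ℝ) := by exact_mod_cast hsle
    calc ‖A N x‖ = (N : ℝ)⁻¹ * |S N x| := by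
          rw [Real.norm_eq_abs, hA_def, abs_mul, abs_inv, Nat.abs_cast]
      _ ≤ (N : ℝ)⁻¹ * (|S (s ^ 2) x| + (N - s ^ 2 : ℕ) * (2 * M)) := by
          refine mul_le_mul_of_nonneg_left ?_ (by positivity)
          calc |S N x| ≤ |S (s ^ 2) x| + |S N x - S (s ^ 2) x| := by
                have := abs_sub_abs_le_abs_sub (S N x) (S (s ^ 2) x)
                linarith [abs_sub_le (S N x) (S (s^2) x) 0]
            _ ≤ |S (s ^ 2) x| + (N - s ^ 2 : ℕ) * (2 * M) := by linarith
      _ ≤ |A (s ^ 2) x| + 4 * M * ((s : ℝ))⁻¹ := by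
          rw [hSs, mul_add]
          have t1 : (N : ℝ)⁻¹ * ((s : ℝ) ^ 2 * |A (s ^ 2) x|) ≤ |A (s ^ 2) x| := by
            rw [← mul_assoc]
            refine mul_le_of_le_one_left (abs_nonneg _) ?_
            rw [inv_mul_le_iff₀ hNpos, mul_one]
            exact hs2leN
          have t2 : (N : ℝ)⁻¹ * ((N - s ^ 2 : ℕ) * (2 * M)) ≤ 4 * M * ((s : ℝ))⁻¹ := by
            have hNinv : (N : ℝ)⁻¹ ≤ ((s : ℝ) ^ 2)⁻¹ := by
              exact inv_anti₀ (by positivity) hs2leN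
            calc (N : ℝ)⁻¹ * ((N - s ^ 2 : ℕ) * (2 * M))
                ≤ ((s : ℝ) ^ 2)⁻¹ * ((2 * s) * (2 * M)) := by
                  refine mul_le_mul hNinv ?_ (by positivity) (by positivity)
                  exact mul_le_mul_of_nonneg_right hcast1 (by positivity)
              _ = 4 * M * ((s : ℝ))⁻¹ := by field_simp; ring
          linarith
  · -- the bound tends to 0
    have t1 : Tendsto (fun N : ℕ => |A (Nat.sqrt N ^ 2) x|) atTop (nhds 0) := by
      have := (hx1.abs).comp hsqrt_tendsto
      simpa [Function.comp_def] using this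
    have t2 : Tendsto (fun N : ℕ => 4 * M * ((Nat.sqrt N : ℝ))⁻¹) atTop (nhds 0) := by
      have h1 : Tendsto (fun N : ℕ => ((Nat.sqrt N : ℕ) : ℝ)) atTop atTop :=
        tendsto_natCast_atTop_atTop.comp hsqrt_tendsto
      have h2 : Tendsto (fun N : ℕ => ((Nat.sqrt N : ℝ))⁻¹) atTop (nhds 0) :=
        tendsto_inv_atTop_zero.comp h1
      have h3 := h2.const_mul (4 * M)
      simpa using h3
    simpa using t1.add t2
end

section
/- Let ν be a self-similar measure for an IFS of affine contractions f_i(x) = s_i x + t_i with strictly positive probability vector p = (p_1,...,p_n), i.e., ν = ∑ p_i f_i ν. If the attractor K is an infinite set and every p_i > 0, then ν has no atoms. -/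
open MeasureTheory Filter

/-- If `ν` is a self-similar measure for affine contractions `f_i(x) = s_i x + t_i` and a
strictly positive probability vector, and the attractor `K` is infinite, then `ν` has no
atoms. -/
theorem stmt11 {m : ℕ} (s t : Fin m → ℝ) (hs : ∀ i, 0 < |s i| ∧ |s i| < 1)
    (p : Fin m → ℝ) (hp : ∀ i, 0 < p i) (hsum : ∑ i, p i = 1)
    (ν : Measure ℝ) [IsProbabilityMeasure ν]
    (hss : ν = ∑ i, ENNReal.ofReal (p i) •
      Measure.map (fun x : ℝ => s i * x + t i) ν)
    (K : Set ℝ) (hne : K.Nonempty) (hcpt : IsCompact K)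
    (hattr : K = ⋃ i, (fun x : ℝ => s i * x + t i) '' K)
    (hsupp : ν Kᶜ = 0) (hinf : K.Infinite) :
    ∀ x : ℝ, ν {x} = 0 := by
  by_contra h
  push_neg at h
  obtain ⟨x₀, hx₀⟩ := h
  have hs0 : ∀ i, s i ≠ 0 := fun i => abs_pos.mp (hs i).1
  -- preimage of a singleton
  have hg : ∀ (i : Fin m) (x : ℝ),
      (fun y : ℝ => s i * y + t i) ⁻¹' {x} = {(x - t i) / s i} := by
    intro i x
    ext y
    simp only [Set.mem_preimage, Set.mem_singleton_iff, eq_div_iff (hs0 i)]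
    constructor <;> intro hE <;> nlinarith [hE]
  -- key self-similarity identity for singletons
  have key : ∀ x : ℝ, ν {x} = ∑ i, ENNReal.ofReal (p i) * ν {(x - t i) / s i} := by
    intro x
    conv_lhs => rw [hss]
    rw [Measure.finset_sum_apply]
    refine Finset.sum_congr rfl fun i _ => ?_
    rw [Measure.smul_apply, smul_eq_mul,
      Measure.map_apply (by fun_prop) (measurableSet_singleton x), hg]
  -- the set of atoms of mass at least ν {x₀} is finite
  have hfin : {x : ℝ | ν {x₀} ≤ ν {x}}.Finite := by
    by_contra hS
    have hS : {x : ℝ | ν {x₀} ≤ ν {x}}.Infinite := hS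
    obtain ⟨n, hn⟩ : ∃ n : ℕ, 1 / ν {x₀} < n :=
      ENNReal.exists_nat_gt (by simp [hx₀])
    obtain ⟨F, hFS, hFcard⟩ := hS.exists_subset_card_eq n
    have hle : (n : ENNReal) * ν {x₀} ≤ 1 := by
      calc (n : ENNReal) * ν {x₀} = ∑ _x ∈ F, ν {x₀} := by
            rw [Finset.sum_const, hFcard, nsmul_eq_mul]
        _ ≤ ∑ x ∈ F, ν {x} := Finset.sum_le_sum fun x hx => hFS hx
        _ = ν (⋃ x ∈ F, {x}) := by
            refine (measure_biUnion_finset ?_ fun _ _ => measurableSet_singleton _).symm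
            intro a _ b _ hab
            simp [Set.disjoint_singleton, hab]
        _ ≤ ν Set.univ := measure_mono (Set.subset_univ _)
        _ = 1 := measure_univ
    have h1 : (1 : ENNReal) < n * ν {x₀} := by
      rwa [ENNReal.div_lt_iff (Or.inl hx₀) (Or.inl (measure_ne_top ν _))] at hn
    exact absurd hle h1.not_ge
  -- a point of maximal atom mass
  obtain ⟨a, haS, hamax⟩ := Set.exists_max_image _ (fun x => ν {x}) hfin ⟨x₀, show ν {x₀} ≤ ν {x₀} from le_rfl⟩
  set M := ν {a} with hM
  have hmax : ∀ x : ℝ, ν {x} ≤ M := by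
    intro x
    by_cases hx : ν {x₀} ≤ ν {x}
    · exact hamax x hx
    · exact (not_le.mp hx).le.trans haS
  have hM0 : M ≠ 0 := fun h0 => hx₀ (le_antisymm (haS.trans h0.le) bot_le)
  have hMtop : M ≠ ⊤ := measure_ne_top ν _
  -- every preimage point of a maximal atom is a maximal atom
  have step : ∀ x : ℝ, ν {x} = M → ∀ i, ν {(x - t i) / s i} = M := by
    intro x hx i
    by_contra hne'
    have hlt : ν {(x - t i) / s i} < M := (hmax _).lt_of_ne hne'
    have hreal : M.toReal = ∑ j, p j * (ν {(x - t j) / s j}).toReal := by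
      rw [← hx, key x, ENNReal.toReal_sum (fun j _ => by
        exact ENNReal.mul_ne_top ENNReal.ofReal_ne_top (measure_ne_top ν _))]
      refine Finset.sum_congr rfl fun j _ => ?_
      rw [ENNReal.toReal_mul, ENNReal.toReal_ofReal (hp j).le]
    have hstrict : ∑ j, p j * (ν {(x - t j) / s j}).toReal < ∑ j : Fin m, p j * M.toReal := by
      refine Finset.sum_lt_sum (fun j _ => ?_) ⟨i, Finset.mem_univ i, ?_⟩
      · exact mul_le_mul_of_nonneg_left
          ((ENNReal.toReal_le_toReal (measure_ne_top ν _) hMtop).mpr (hmax _)) (hp j).le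
      · exact mul_lt_mul_of_pos_left
          ((ENNReal.toReal_lt_toReal (measure_ne_top ν _) hMtop).mpr hlt) (hp i)
    rw [← Finset.sum_mul, hsum, one_mul] at hstrict
    rw [← hreal] at hstrict
    exact lt_irrefl _ hstrict
  -- the set of maximal atoms
  set A : Set ℝ := {x | ν {x} = M} with hA
  have haA : a ∈ A := rfl
  have hAfin : A.Finite := hfin.subset fun x hx => haS.trans hx.ge
  -- each inverse map sends A into A, hence (by finiteness) each f i maps A onto A
  have hginj : ∀ i : Fin m, Set.InjOn (fun x : ℝ => (x - t i) / s i) A := by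
    intro i x _ y _ hxy
    have h2 : x - t i = y - t i := by
      rw [div_eq_div_iff (hs0 i) (hs0 i)] at hxy
      exact mul_right_cancel₀ (hs0 i) hxy
    linarith
  have hgA : ∀ i : Fin m, (fun x : ℝ => (x - t i) / s i) '' A = A := by
    intro i
    refine Set.Finite.eq_of_subset_of_encard_le' hAfin ?_ ?_
    · rintro _ ⟨x, hx, rfl⟩
      exact step x hx i
    · exact ((hginj i).encard_image).ge
  have hfA : ∀ i : Fin m, (fun x : ℝ => s i * x + t i) '' A = A := by
    intro i
    conv_lhs => rw [← hgA i]
    rw [← Set.image_comp]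
    have : ((fun x : ℝ => s i * x + t i) ∘ fun x : ℝ => (x - t i) / s i) = id := by
      funext x
      simp only [Function.comp_apply, id_eq]
      rw [mul_comm, div_mul_cancel₀ _ (hs0 i)]
      ring
    rw [this, Set.image_id]
  -- m > 0
  have hm : 0 < m := by
    rcases Nat.eq_zero_or_pos m with h0 | h0
    · subst h0; simp at hsum
    · exact h0
  -- A is a singleton: any two points of A coincide
  have hAsub : ∀ x ∈ A, ∀ y ∈ A, x = y := by
    obtain ⟨q, hq, hqmax⟩ := (hAfin.prod hAfin).isCompact.exists_isMaxOn
      (⟨(a, a), haA, haA⟩ : (A ×ˢ A).Nonempty)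
      (Continuous.continuousOn (by fun_prop : Continuous fun q : ℝ × ℝ => |q.1 - q.2|))
    set D := |q.1 - q.2| with hD
    have hD0 : D = 0 := by
      set i : Fin m := ⟨0, hm⟩
      obtain ⟨x1, hx1, hx1e⟩ : q.1 ∈ (fun x : ℝ => s i * x + t i) '' A := by
        rw [hfA i]; exact hq.1
      obtain ⟨y1, hy1, hy1e⟩ : q.2 ∈ (fun x : ℝ => s i * x + t i) '' A := by
        rw [hfA i]; exact hq.2
      have hsmall : D = |s i| * |x1 - y1| := by
        rw [hD, ← hx1e, ← hy1e, ← abs_mul]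
        ring_nf
      have hle : |x1 - y1| ≤ D := hqmax (Set.mk_mem_prod hx1 hy1)
      nlinarith [abs_nonneg (q.1 - q.2), (hs i).1, (hs i).2]
    intro x hx y hy
    have h1 : |x - y| ≤ D := hqmax (Set.mk_mem_prod hx hy)
    have := abs_nonneg (x - y)
    have : |x - y| = 0 := le_antisymm (h1.trans_eq hD0) (abs_nonneg _)
    have := abs_eq_zero.mp this
    linarith
  -- a is a common fixed point of all the maps
  have hfix : ∀ i : Fin m, s i * a + t i = a := by
    intro i
    have : s i * a + t i ∈ A := by
      rw [← hfA i]; exact ⟨a, haA, rfl⟩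
    exact hAsub _ this a haA
  -- K is then a subset of {a}, contradicting infiniteness
  obtain ⟨z, hz, hzmax⟩ := hcpt.exists_isMaxOn hne
    (Continuous.continuousOn (by fun_prop : Continuous fun x : ℝ => |x - a|))
  have hz0 : |z - a| = 0 := by
    have hzU : z ∈ ⋃ i, (fun x : ℝ => s i * x + t i) '' K := hattr ▸ hz
    obtain ⟨i, y, hy, hye⟩ : ∃ i, ∃ y ∈ K, s i * y + t i = z := by
      simpa using hzU
    have hfa := hfix i
    have heq : |z - a| = |s i| * |y - a| := by
      rw [← hye, ← abs_mul]
      have : s i * y + t i - a = s i * (y - a) := by linarith [hfa]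
      rw [this]
    have hle : |y - a| ≤ |z - a| := hzmax hy
    nlinarith [abs_nonneg (z - a), (hs i).1, (hs i).2]
  refine hinf ((Set.finite_singleton a).subset fun x hx => ?_)
  have h1 : |x - a| ≤ |z - a| := hzmax hx
  have : |x - a| = 0 := le_antisymm (h1.trans_eq hz0) (abs_nonneg _)
  have := abs_eq_zero.mp this
  simp only [Set.mem_singleton_iff]
  linarith
end
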